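/- For the 2D energy-based SBP-SAT discretization with Dirichlet boundary conditions, the discrete energy E_H = uᵀ𝐀u + vᵀ𝐇v satisfies dE_H/dt = 2θ vᵀ(e_W H_y e_Wᵀ + e_E H_y e_Eᵀ + e_S H_x e_Sᵀ + e_N H_x e_Nᵀ)v ≤ 0 for θ ≤ 0, assuming homogeneous boundary data and zero forcing. -/

import Mathlib

/-!
Write `B := 𝐇𝐃 + 𝐀` for the boundary part of `𝐇𝐃`. By symmetry of `H_x` and `H_y` the two
equations read `𝐀(u' - v) = -Bᵀv` and `𝐇v' = (B - 𝐀)u + θ S v`, where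
`S = e_W H_y e_Wᵀ + e_E H_y e_Eᵀ + e_S H_x e_Sᵀ + e_N H_x e_Nᵀ`.
In `½ E_H' = uᵀ𝐀u' + vᵀ𝐇v'` the terms `uᵀ𝐀v` and `vᵀ𝐀u` cancel by symmetry of `𝐀`, as do
`uᵀBᵀv` and `vᵀBu`, leaving `θ vᵀSv`, which is `≤ 0` because `S` is positive semidefinite.
-/

open Matrix

namespace Matrix

variable {ι κ α : Type*} [Fintype ι] [Fintype κ] [CommRing α]

theorem IsSymm.dotProduct_mulVec_comm {M : Matrix ι ι α} (hM : M.IsSymm) (x y : ι → α) :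
    x ⬝ᵥ M *ᵥ y = y ⬝ᵥ M *ᵥ x := by
  rw [← dotProduct_transpose_mulVec, hM.eq]

theorem PosSemidef.dotProduct_mulVec_mulVec_transpose_nonneg {M : Matrix κ κ ℝ}
    (hM : M.PosSemidef) (P : Matrix ι κ ℝ) (x : ι → ℝ) :
    0 ≤ x ⬝ᵥ P *ᵥ M *ᵥ Pᵀ *ᵥ x := by
  rw [dotProduct_mulVec, ← mulVec_transpose]
  simpa using hM.dotProduct_mulVec_nonneg (Pᵀ *ᵥ x)

theorem dotProduct_mulVec_add_dotProduct_mulVec_eq {A H B : Matrix ι ι α} (hA : A.IsSymm)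
    {u v u' v' w : ι → α} (hu : A *ᵥ (u' - v) = -(Bᵀ *ᵥ v))
    (hv : H *ᵥ v' = (B - A) *ᵥ u + w) :
    u ⬝ᵥ A *ᵥ u' + v ⬝ᵥ H *ᵥ v' = v ⬝ᵥ w := by
  rw [mulVec_sub, sub_eq_iff_eq_add] at hu
  rw [hu, hv, sub_mulVec]
  simp only [dotProduct_add, dotProduct_sub, dotProduct_neg]
  rw [dotProduct_transpose_mulVec, hA.dotProduct_mulVec_comm u v]
  ring

end Matrix

section Derivatives

variable {ι κ : Type*} [Fintype ι] [Fintype κ] {u v : ℝ → ι → ℝ} {U V : ι → ℝ} {t : ℝ}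

theorem HasDerivAt.dotProduct (hu : HasDerivAt u U t) (hv : HasDerivAt v V t) :
    HasDerivAt (fun s => u s ⬝ᵥ v s) (U ⬝ᵥ v t + u t ⬝ᵥ V) t := by
  have hi : ∀ i ∈ Finset.univ,
      HasDerivAt (fun s => u s i * v s i) (U i * v t i + u t i * V i) t :=
    fun i _ => (hasDerivAt_pi.mp hu i).mul (hasDerivAt_pi.mp hv i)
  have hsum := HasDerivAt.fun_sum hi
  rw [Finset.sum_add_distrib] at hsum
  exact hsum

theorem HasDerivAt.mulVec (M : Matrix κ ι ℝ) (hv : HasDerivAt v V t) :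
    HasDerivAt (fun s => M *ᵥ v s) (M *ᵥ V) t :=
  (LinearMap.toContinuousLinearMap (Matrix.mulVecLin M)).hasFDerivAt.comp_hasDerivAt t hv

theorem HasDerivAt.dotProduct_mulVec_self {M : Matrix ι ι ℝ} (hM : M.IsSymm)
    (hu : HasDerivAt u U t) :
    HasDerivAt (fun s => u s ⬝ᵥ M *ᵥ u s) (2 * (u t ⬝ᵥ M *ᵥ U)) t := by
  convert hu.dotProduct (hu.mulVec M) using 1
  rw [hM.dotProduct_mulVec_comm U]
  ring

end Derivatives

/-- Energy estimate for the 2D energy-based SBP-SAT discretization with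
homogeneous Dirichlet boundary data and zero forcing: the discrete energy
`E_H = uᵀAAu + vᵀHHv` satisfies
`dE_H/dt = 2θ vᵀ(e_W H_y e_Wᵀ + e_E H_y e_Eᵀ + e_S H_x e_Sᵀ + e_N H_x e_Nᵀ)v ≤ 0`
when `θ ≤ 0`. -/
theorem stmt13 {ι ιx ιy : Type*} [Fintype ι] [Fintype ιx] [Fintype ιy]
    [DecidableEq ι]
    (AA HH DD : Matrix ι ι ℝ) (hA : AA.PosSemidef) (hH : HH.PosDef)
    (Hx : Matrix ιx ιx ℝ) (Hy : Matrix ιy ιy ℝ)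
    (hHx : Hx.PosDef) (hHy : Hy.PosDef)
    (eW eE dW dE : Matrix ι ιy ℝ) (eS eN dS dN : Matrix ι ιx ℝ)
    (θ : ℝ) (hθ : θ ≤ 0)
    (hD : HH * DD = -AA - eW * Hy * dWᵀ + eE * Hy * dEᵀ
        - eS * Hx * dSᵀ + eN * Hx * dNᵀ)
    (u v u' v' : ℝ → ι → ℝ)
    (hu : ∀ t, HasDerivAt u (u' t) t) (hv : ∀ t, HasDerivAt v (v' t) t)
    (heq1 : ∀ t, AA *ᵥ (u' t - v t) =
        dW *ᵥ (Hy *ᵥ (eWᵀ *ᵥ v t)) - dE *ᵥ (Hy *ᵥ (eEᵀ *ᵥ v t))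
          + dS *ᵥ (Hx *ᵥ (eSᵀ *ᵥ v t)) - dN *ᵥ (Hx *ᵥ (eNᵀ *ᵥ v t)))
    (heq2 : ∀ t, v' t = DD *ᵥ u t
        + θ • (HH⁻¹ *ᵥ (eW *ᵥ (Hy *ᵥ (eWᵀ *ᵥ v t)) + eE *ᵥ (Hy *ᵥ (eEᵀ *ᵥ v t))
            + eS *ᵥ (Hx *ᵥ (eSᵀ *ᵥ v t)) + eN *ᵥ (Hx *ᵥ (eNᵀ *ᵥ v t)))))
    (E : ℝ → ℝ)
    (hE : ∀ t, E t = u t ⬝ᵥ (AA *ᵥ u t) + v t ⬝ᵥ (HH *ᵥ v t)) :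
    ∀ t, HasDerivAt E
        (2 * θ * (v t ⬝ᵥ (eW *ᵥ (Hy *ᵥ (eWᵀ *ᵥ v t)))
          + v t ⬝ᵥ (eE *ᵥ (Hy *ᵥ (eEᵀ *ᵥ v t)))
          + v t ⬝ᵥ (eS *ᵥ (Hx *ᵥ (eSᵀ *ᵥ v t)))
          + v t ⬝ᵥ (eN *ᵥ (Hx *ᵥ (eNᵀ *ᵥ v t))))) t ∧
      2 * θ * (v t ⬝ᵥ (eW *ᵥ (Hy *ᵥ (eWᵀ *ᵥ v t)))
          + v t ⬝ᵥ (eE *ᵥ (Hy *ᵥ (eEᵀ *ᵥ v t)))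
          + v t ⬝ᵥ (eS *ᵥ (Hx *ᵥ (eSᵀ *ᵥ v t)))
          + v t ⬝ᵥ (eN *ᵥ (Hx *ᵥ (eNᵀ *ᵥ v t)))) ≤ 0 := by
  intro t
  have hAs : AA.IsSymm := isHermitian_iff_isSymm.mp hA.isHermitian
  have hHs : HH.IsSymm := isHermitian_iff_isSymm.mp hH.isHermitian
  have hHxs : Hxᵀ = Hx := (isHermitian_iff_isSymm.mp hHx.isHermitian).eq
  have hHys : Hyᵀ = Hy := (isHermitian_iff_isSymm.mp hHy.isHermitian).eq
  have hu_sat : AA *ᵥ (u' t - v t) = -((HH * DD + AA)ᵀ *ᵥ v t) := by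
    rw [heq1 t, hD]
    simp only [transpose_add, transpose_sub, transpose_neg, transpose_mul,
      transpose_transpose, hHxs, hHys, add_mulVec, sub_mulVec, neg_mulVec, ← mulVec_mulVec]
    abel
  have hv_sat : HH *ᵥ v' t = (HH * DD + AA - AA) *ᵥ u t
      + θ • (eW *ᵥ (Hy *ᵥ (eWᵀ *ᵥ v t)) + eE *ᵥ (Hy *ᵥ (eEᵀ *ᵥ v t))
        + eS *ᵥ (Hx *ᵥ (eSᵀ *ᵥ v t)) + eN *ᵥ (Hx *ᵥ (eNᵀ *ᵥ v t))) := by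
    rw [heq2 t, add_sub_cancel_right, mulVec_add, mulVec_smul, mulVec_mulVec, mulVec_mulVec,
      mul_nonsing_inv _ ((isUnit_iff_isUnit_det HH).mp hH.isUnit), one_mulVec]
  have hrate := dotProduct_mulVec_add_dotProduct_mulVec_eq hAs hu_sat hv_sat
  have hderiv := ((hu t).dotProduct_mulVec_self hAs).add ((hv t).dotProduct_mulVec_self hHs)
  refine ⟨?_, mul_nonpos_of_nonpos_of_nonneg (by linarith) ?_⟩
  · rw [show E = _ from funext hE]
    refine hderiv.congr_deriv ?_
    rw [← mul_add, hrate]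
    simp only [dotProduct_smul, dotProduct_add, smul_eq_mul]
    ring
  · have hy (e : Matrix ι ιy ℝ) :=
      hHy.posSemidef.dotProduct_mulVec_mulVec_transpose_nonneg e (v t)
    have hx (e : Matrix ι ιx ℝ) :=
      hHx.posSemidef.dotProduct_mulVec_mulVec_transpose_nonneg e (v t)
    exact add_nonneg (add_nonneg (add_nonneg (hy eW) (hy eE)) (hx eS)) (hx eN)
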